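/- Under the same assumptions as in the existence result — $(X_i, T_i)$ i.i.d., $\mathbb{E}\|c(X)\| < \infty$, $0 < P(T=1) < 1$, and every box $R_b$ of sup-norm radius $\epsilon/2$ centered at $c^* + \tfrac{3}{2}\epsilon\, b$ ($b \in \{-1,0,1\}^p$, $c^* = \mathbb{E}[c(X)|T=1]$) having positive conditional probability given $T=0$ — the following holds: for every $\delta > 0$, the probability that there exist feasible weights $w$ (i.e., $w_i > 0$, $\sum_{T_i=0, i\le n} w_i = 1$, $\sum_{T_i=0, i \le n} w_i c(X_i) = \frac{1}{n_1}\sum_{T_i=1, i\le n} c(X_i)$) with $\max_i w_i < \delta$ (and hence $\sum_{T_i=0} w_i^2 < \delta$) tends to $1$ as $n \to \infty$. -/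

import Mathlib

/-!
By the strong law of large numbers, almost surely for all large `n` the treated mean is within
`ε / 2` of `c*` and each of the `2 ^ p` corner boxes of radius `ε / 2` around `c* + (3 / 2) ε b`,
`b ∈ {±1} ^ p`, contains at least `K` control points. The averages of the control points in the
corner boxes form a perturbed cube whose convex hull contains the sup-norm ball of radius `ε`
about `c*`, and each of these averages spreads its mass over at least `K` points; so every point
of that ball is a mean of the control points with weights at most `1 / K`. Mixing in a small
multiple of the uniform weighting makes all weights strictly positive and moves the mean by an
amount that the slack between `ε / 2` and `ε` absorbs. Taking `1 / K < δ` bounds both the largest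
weight and the sum of squared weights by `δ`.
-/

open MeasureTheory ProbabilityTheory Filter Finset Topology

def cubeVertex {p : ℕ} (b : Fin p → Bool) : Fin p → ℝ := fun j => if b j then 1 else -1

lemma norm_tail_sub_tail_le {p : ℕ} (v w : Fin (p + 1) → ℝ) :
    ‖Fin.tail v - Fin.tail w‖ ≤ ‖v - w‖ :=
  (pi_norm_le_iff_of_nonneg (norm_nonneg _)).2 fun j => norm_le_pi_norm (v - w) j.succ

lemma tail_mem_segment {p : ℕ} {u v z : Fin (p + 1) → ℝ} (hz : z ∈ segment ℝ u v) :
    Fin.tail z ∈ segment ℝ (Fin.tail u) (Fin.tail v) := by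
  obtain ⟨a, b, ha, hb, hab, rfl⟩ := hz
  exact ⟨a, b, ha, hb, hab, rfl⟩

lemma exists_mem_segment_apply_eq {ι : Type*} {u v : ι → ℝ} {i : ι} {t : ℝ} (hv : v i ≤ t)
    (hu : t ≤ u i) : ∃ z ∈ segment ℝ u v, z i = t := by
  obtain ⟨a, b, ha, hb, hab, h⟩ := Icc_subset_segment (𝕜 := ℝ) ⟨hv, hu⟩
  exact ⟨b • u + a • v, ⟨b, a, hb, ha, by linarith, rfl⟩, by simpa [add_comm] using h⟩

theorem mem_convexHull_of_near_cubeVertex :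
    ∀ {p : ℕ} {x : (Fin p → Bool) → Fin p → ℝ} {c y : Fin p → ℝ} {r s : ℝ},
    (∀ b, ‖x b - (c + r • cubeVertex b)‖ ≤ s) → ‖y - c‖ ≤ r - s →
    y ∈ convexHull ℝ (Set.range x)
  | 0, _, _, _, _, _, _, _ => subset_convexHull ℝ _ ⟨default, Subsingleton.elim _ _⟩
  | p + 1, x, c, y, r, s, hx, hy => by
    have hx0 : ∀ b, |x b 0 - (c 0 + r * cubeVertex b 0)| ≤ s := fun b => by
      simpa using (norm_le_pi_norm _ 0).trans (hx b)
    have hy0 : |y 0 - c 0| ≤ r - s := by simpa using (norm_le_pi_norm _ 0).trans hy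
    -- Cutting each edge in direction `0` at height `y 0` gives a perturbed `p`-cube in the
    -- remaining coordinates, to which the induction hypothesis applies.
    have hedge : ∀ b', ∃ z ∈ segment ℝ (x (Fin.cons true b')) (x (Fin.cons false b')),
        z 0 = y 0 := fun b' => by
      have h₁ := abs_le.1 (hx0 (Fin.cons true b'))
      have h₂ := abs_le.1 (hx0 (Fin.cons false b'))
      simp only [cubeVertex, Fin.cons_zero, if_true, Bool.false_eq_true, if_false] at h₁ h₂
      exact exists_mem_segment_apply_eq (by linarith [(abs_le.1 hy0).1])
        (by linarith [(abs_le.1 hy0).2])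
    choose z hz hz0 using hedge
    have htail : ∀ b', ‖Fin.tail (z b') - (Fin.tail c + r • cubeVertex b')‖ ≤ s := fun b' => by
      have hball : ∀ t, Fin.tail (x (Fin.cons t b')) ∈
          Metric.closedBall (Fin.tail c + r • cubeVertex b') s := fun t =>
        mem_closedBall_iff_norm.2
          ((norm_tail_sub_tail_le _ (c + r • cubeVertex (Fin.cons t b'))).trans (hx _))
      exact mem_closedBall_iff_norm.1 ((convex_closedBall _ s).segment_subset (hball true)
        (hball false) (tail_mem_segment (hz b')))
    let tail : (Fin (p + 1) → ℝ) →ₗ[ℝ] Fin p → ℝ := LinearMap.funLeft ℝ ℝ Fin.succ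
    obtain ⟨y', hy', hy'tail⟩ : Fin.tail y ∈ tail '' convexHull ℝ (Set.range z) := by
      rw [LinearMap.image_convexHull, ← Set.range_comp]
      exact mem_convexHull_of_near_cubeVertex htail ((norm_tail_sub_tail_le y c).trans hy)
    have hy'0 : y' 0 = y 0 := convexHull_min (Set.range_subset_iff.2 hz0)
      (convex_hyperplane (LinearMap.proj (R := ℝ) (φ := fun _ => ℝ) 0).isLinear _) hy'
    have hy'y : y' = y := funext fun j => Fin.cases hy'0 (fun j => congrFun hy'tail j) j
    refine convexHull_min (Set.range_subset_iff.2 fun b' => ?_) (convex_convexHull ℝ _)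
      (hy'y ▸ hy')
    exact segment_subset_convexHull (Set.mem_range_self _) (Set.mem_range_self _) (hz b')

section BoundedWeightMeans

variable {ι E : Type*} [AddCommGroup E] [Module ℝ E]

def boundedWeightMeans (S : Finset ι) (c : ℝ) (f : ι → E) : Set E :=
  {z | ∃ w : ι → ℝ, (∀ i ∈ S, 0 ≤ w i ∧ w i ≤ c) ∧ ∑ i ∈ S, w i = 1 ∧ ∑ i ∈ S, w i • f i = z}

lemma convex_boundedWeightMeans (S : Finset ι) (c : ℝ) (f : ι → E) :
    Convex ℝ (boundedWeightMeans S c f) := by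
  rintro _ ⟨v, hv, hv1, rfl⟩ _ ⟨w, hw, hw1, rfl⟩ a b ha hb hab
  refine ⟨a • v + b • w, fun i hi => ⟨?_, ?_⟩, ?_, ?_⟩
  · have := (hv i hi).1
    have := (hw i hi).1
    simp only [Pi.add_apply, Pi.smul_apply, smul_eq_mul]
    positivity
  · simp only [Pi.add_apply, Pi.smul_apply, smul_eq_mul]
    nlinarith [hv i hi, hw i hi]
  · simp [sum_add_distrib, ← mul_sum, hv1, hw1, hab]
  · simp [sum_add_distrib, add_smul, mul_smul, smul_sum]

lemma average_mem_boundedWeightMeans {S T : Finset ι} {c : ℝ} (f : ι → E) (hTS : T ⊆ S)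
    (hT : T.Nonempty) (hc : (#T : ℝ)⁻¹ ≤ c) :
    (#T : ℝ)⁻¹ • ∑ i ∈ T, f i ∈ boundedWeightMeans S c f := by
  classical
  have hT0 : (#T : ℝ) ≠ 0 := by exact_mod_cast hT.card_pos.ne'
  refine ⟨fun i => if i ∈ T then (#T : ℝ)⁻¹ else 0, fun i _ => ?_, ?_, ?_⟩
  · have : (0 : ℝ) ≤ (#T : ℝ)⁻¹ := by positivity
    dsimp only
    split_ifs <;> constructor <;> linarith
  · rw [sum_ite_mem, inter_eq_right.2 hTS, sum_const, nsmul_eq_mul, mul_inv_cancel₀ hT0]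
  · simp_rw [ite_smul, zero_smul]
    rw [sum_ite_mem, inter_eq_right.2 hTS, smul_sum]

lemma exists_pos_weights_of_mem_boundedWeightMeans {S : Finset ι} {c α : ℝ} {f : ι → E} {z : E}
    (hz : z ∈ boundedWeightMeans S c f) (hS : S.Nonempty) (hSc : (#S : ℝ)⁻¹ ≤ c)
    (hα : 0 < α) (hα1 : α ≤ 1) :
    ∃ w : ι → ℝ, (∀ i ∈ S, 0 < w i ∧ w i ≤ c) ∧ ∑ i ∈ S, w i = 1 ∧
      ∑ i ∈ S, w i • f i = α • (#S : ℝ)⁻¹ • ∑ i ∈ S, f i + (1 - α) • z := by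
  obtain ⟨v, hv, hv1, rfl⟩ := hz
  have hS0 : (#S : ℝ) ≠ 0 := by exact_mod_cast hS.card_pos.ne'
  refine ⟨fun i => α * (#S : ℝ)⁻¹ + (1 - α) * v i, fun i hi => ⟨?_, ?_⟩, ?_, ?_⟩
  · have := (hv i hi).1
    have : 0 ≤ 1 - α := by linarith
    positivity
  · nlinarith [hv i hi]
  · rw [sum_add_distrib, sum_const, nsmul_eq_mul, ← mul_sum, hv1]
    field_simp
    ring
  · simp [add_smul, mul_smul, sum_add_distrib, smul_sum]

end BoundedWeightMeans

lemma exists_eq_smul_add_smul_of_norm_sub_le {E : Type*} [SeminormedAddCommGroup E]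
    [NormedSpace ℝ E] {x y : E} {ε : ℝ} (hε : 0 < ε) (hy : ‖y - x‖ ≤ ε / 2) (u : E) :
    ∃ α : ℝ, ∃ z : E, 0 < α ∧ α ≤ 1 ∧ ‖z - x‖ ≤ ε ∧ y = α • u + (1 - α) • z := by
  set B := ‖u - x‖
  have hB : 0 ≤ B := norm_nonneg _
  set α := ε / (2 * (B + ε))
  have hα : 0 < α := by positivity
  have hα1 : α < 1 := by rw [div_lt_one (by positivity)]; linarith
  have hα' : (1 - α) ≠ 0 := by linarith
  -- `α` is chosen so that `ε / 2 + α * B = (1 - α) * ε`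
  have hkey : ε / 2 + α * B = (1 - α) * ε := by simp only [α]; field_simp; ring
  refine ⟨α, (1 - α)⁻¹ • (y - α • u), hα, hα1.le, ?_, ?_⟩
  · have : (1 - α)⁻¹ • (y - α • u) - x = (1 - α)⁻¹ • ((y - x) - α • (u - x)) := by
      linear_combination (norm := module) (inv_mul_cancel₀ hα') • x
    rw [this, norm_smul, norm_inv, Real.norm_of_nonneg (by linarith : (0:ℝ) ≤ 1 - α),
      inv_mul_le_iff₀ (by linarith)]
    calc ‖y - x - α • (u - x)‖ ≤ ‖y - x‖ + α * ‖u - x‖ :=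
          (norm_sub_le _ _).trans_eq (by rw [norm_smul, Real.norm_of_nonneg hα.le])
      _ ≤ ε / 2 + α * B := by gcongr
      _ = (1 - α) * ε := hkey
  · rw [smul_smul, mul_inv_cancel₀ hα', one_smul, add_sub_cancel]

lemma sum_sq_le_of_forall_le {ι : Type*} {S : Finset ι} {w : ι → ℝ} {c : ℝ}
    (hw : ∀ i ∈ S, 0 ≤ w i ∧ w i ≤ c) (hw1 : ∑ i ∈ S, w i = 1) : ∑ i ∈ S, w i ^ 2 ≤ c :=
  calc ∑ i ∈ S, w i ^ 2 ≤ ∑ i ∈ S, w i * c :=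
        sum_le_sum fun i hi => by rw [sq]; exact mul_le_mul_of_nonneg_left (hw i hi).2 (hw i hi).1
    _ = c := by rw [← sum_mul, hw1, one_mul]

theorem exists_balancing_weights {ι : Type*} {p K : ℕ} {S : Finset ι} {f : ι → Fin p → ℝ}
    {y cstar : Fin p → ℝ} {ε : ℝ} (hε : 0 < ε) (hK : 0 < K)
    (hcorner : ∀ b, ∃ T ⊆ S, K ≤ #T ∧
      ∀ i ∈ T, ‖f i - (cstar + (3 / 2 * ε) • cubeVertex b)‖ ≤ ε / 2)
    (hy : ‖y - cstar‖ ≤ ε / 2) :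
    ∃ w : ι → ℝ, (∀ i ∈ S, 0 < w i ∧ w i ≤ (K : ℝ)⁻¹) ∧ ∑ i ∈ S, w i = 1 ∧
      ∑ i ∈ S, w i • f i = y := by
  choose T hTS hKT hTf using hcorner
  have hT : ∀ b, (T b).Nonempty := fun b => card_pos.1 (hK.trans_le (hKT b))
  have hKinv : ∀ {U : Finset ι}, K ≤ #U → (#U : ℝ)⁻¹ ≤ (K : ℝ)⁻¹ := fun h =>
    inv_anti₀ (by positivity) (by exact_mod_cast h)
  set m := fun b => (#(T b) : ℝ)⁻¹ • ∑ i ∈ T b, f i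
  have hm : ∀ b, ‖m b - (cstar + (3 / 2 * ε) • cubeVertex b)‖ ≤ ε / 2 := fun b => by
    have hT0 : (#(T b) : ℝ) ≠ 0 := by exact_mod_cast (hT b).card_pos.ne'
    have := (convex_closedBall (cstar + (3 / 2 * ε) • cubeVertex b) (ε / 2)).sum_mem
      (t := T b) (w := fun _ => (#(T b) : ℝ)⁻¹) (z := f) (fun _ _ => by positivity)
      (by rw [sum_const, nsmul_eq_mul, mul_inv_cancel₀ hT0])
      (fun i hi => mem_closedBall_iff_norm.2 (hTf b i hi))
    rwa [← smul_sum, mem_closedBall_iff_norm] at this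
  have hhull : convexHull ℝ (Set.range m) ⊆ boundedWeightMeans S (K : ℝ)⁻¹ f :=
    convexHull_min (Set.range_subset_iff.2 fun b =>
      average_mem_boundedWeightMeans f (hTS b) (hT b) (hKinv (hKT b)))
      (convex_boundedWeightMeans _ _ _)
  obtain ⟨α, z, hα, hα1, hz, rfl⟩ :=
    exists_eq_smul_add_smul_of_norm_sub_le hε hy ((#S : ℝ)⁻¹ • ∑ i ∈ S, f i)
  have hzm : z ∈ convexHull ℝ (Set.range m) :=
    mem_convexHull_of_near_cubeVertex hm (by linarith)
  obtain ⟨b⟩ : Nonempty (Fin p → Bool) := inferInstance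
  exact exists_pos_weights_of_mem_boundedWeightMeans (hhull hzm) ((hT b).mono (hTS b))
    (hKinv ((hKT b).trans (card_le_card (hTS b)))) hα hα1

theorem exists_feasible_weights {ι : Type*} {p K : ℕ} {S S₁ : Finset ι} {f : ι → Fin p → ℝ}
    {cstar : Fin p → ℝ} {ε δ : ℝ} (hε : 0 < ε) (hK : 0 < K) (hKδ : (K : ℝ)⁻¹ < δ)
    (hcorner : ∀ b, ∃ T ⊆ S, K ≤ #T ∧
      ∀ i ∈ T, ‖f i - (cstar + (3 / 2 * ε) • cubeVertex b)‖ ≤ ε / 2)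
    (hy : ‖(#S₁ : ℝ)⁻¹ • ∑ i ∈ S₁, f i - cstar‖ ≤ ε / 2) :
    ∃ w : ι → ℝ, (∀ i ∈ S, 0 < w i) ∧ ∑ i ∈ S, w i = 1 ∧
      (∀ j, ∑ i ∈ S, w i * f i j = (#S₁ : ℝ)⁻¹ * ∑ i ∈ S₁, f i j) ∧
      (∀ i ∈ S, w i < δ) ∧ ∑ i ∈ S, w i ^ 2 < δ := by
  obtain ⟨w, hw, hw1, hwf⟩ := exists_balancing_weights hε hK hcorner hy
  refine ⟨w, fun i hi => (hw i hi).1, hw1, fun j => by simpa using congrFun hwf j,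
    fun i hi => (hw i hi).2.trans_lt hKδ, ?_⟩
  exact (sum_sq_le_of_forall_le (fun i hi => ⟨(hw i hi).1.le, (hw i hi).2⟩) hw1).trans_lt hKδ

lemma measure_inter_ne_zero_of_cond_pos {Ω : Type*} [MeasurableSpace Ω] {μ : Measure Ω}
    {s : Set Ω} (hs : MeasurableSet s) {p : ℕ} {F : Ω → Fin p → ℝ} {x : Fin p → ℝ} {ρ : ℝ}
    (hρ : 0 ≤ ρ) (h : 0 < μ[|s] {ω | ∀ j, |F ω j - x j| ≤ ρ}) :
    μ (s ∩ {ω | ‖F ω - x‖ ≤ ρ}) ≠ 0 := by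
  rw [cond_apply hs] at h
  convert right_ne_zero_of_mul h.ne' using 3
  simp [pi_norm_le_iff_of_nonneg hρ, Real.norm_eq_abs]

lemma tendsto_measure_of_ae_eventually_mem {Ω : Type*} [MeasurableSpace Ω] {μ : Measure Ω}
    [IsProbabilityMeasure μ] {E : ℕ → Set Ω} (h : ∀ᵐ ω ∂μ, ∀ᶠ n in atTop, ω ∈ E n) :
    Tendsto (fun n => μ (E n)) atTop (𝓝 1) := by
  -- no measurability is needed: continuity from below holds for arbitrary increasing sets
  set F : ℕ → Set Ω := fun n => ⋂ m ≥ n, E m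
  have hF : Monotone F := fun n n' hnn' =>
    Set.biInter_subset_biInter_left fun m (hm : n' ≤ m) => hnn'.trans hm
  have hU : μ (⋃ n, F n) = 1 := by
    refine le_antisymm prob_le_one ?_
    rw [← measure_univ (μ := μ)]
    refine measure_mono_ae (h.mono fun ω hω _ => ?_)
    obtain ⟨n, hn⟩ := eventually_atTop.1 hω
    exact Set.mem_iUnion.2 ⟨n, Set.mem_iInter₂.2 hn⟩
  have hlim := tendsto_measure_iUnion_atTop (μ := μ) hF
  rw [hU] at hlim
  exact tendsto_of_tendsto_of_tendsto_of_le_of_le hlim tendsto_const_nhds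
    (fun n => measure_mono (Set.iInter₂_subset n le_rfl)) (fun n => prob_le_one)

section StrongLaw

variable {Ω α E : Type*} [MeasurableSpace Ω] [MeasurableSpace α] {μ : Measure Ω}
  [NormedAddCommGroup E] [NormedSpace ℝ E] [CompleteSpace E]
  [MeasurableSpace E] [BorelSpace E] {Z : ℕ → Ω → α}

lemma ae_tendsto_average_comp (hindep : iIndepFun Z μ)
    (hident : ∀ i, IdentDistrib (Z i) (Z 0) μ μ) {g : α → E} (hg : Measurable g)
    (hint : Integrable (g ∘ Z 0) μ) :
    ∀ᵐ ω ∂μ, Tendsto (fun n : ℕ => (n : ℝ)⁻¹ • ∑ i ∈ range n, g (Z i ω)) atTop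
      (𝓝 (∫ ω, g (Z 0 ω) ∂μ)) :=
  strong_law_ae (fun i => g ∘ Z i) hint (fun _ _ hij => (hindep.indepFun hij).comp hg hg)
    fun i => (hident i).comp hg

variable [IsFiniteMeasure μ] {P : α → Prop} [DecidablePred P]

lemma ae_tendsto_inv_mul_card_filter (hZ : Measurable (Z 0)) (hindep : iIndepFun Z μ)
    (hident : ∀ i, IdentDistrib (Z i) (Z 0) μ μ) (hP : MeasurableSet {a | P a}) :
    ∀ᵐ ω ∂μ, Tendsto (fun n : ℕ => (n : ℝ)⁻¹ * #{i ∈ range n | P (Z i ω)}) atTop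
      (𝓝 (μ.real {ω | P (Z 0 ω)})) := by
  filter_upwards [ae_tendsto_average_comp hindep hident (measurable_const.indicator hP)
    ((integrable_const (1 : ℝ)).indicator (hZ hP))] with ω hω
  convert hω using 2 with n
  · simp [Set.indicator_apply, sum_boole]
  · exact (integral_indicator_one (hZ hP)).symm

lemma ae_tendsto_card_filter_atTop (hZ : Measurable (Z 0)) (hindep : iIndepFun Z μ)
    (hident : ∀ i, IdentDistrib (Z i) (Z 0) μ μ) (hP : MeasurableSet {a | P a})
    (hpos : μ {ω | P (Z 0 ω)} ≠ 0) :
    ∀ᵐ ω ∂μ, Tendsto (fun n => #{i ∈ range n | P (Z i ω)}) atTop atTop := by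
  filter_upwards [ae_tendsto_inv_mul_card_filter hZ hindep hident hP] with ω hω
  have hq : 0 < μ.real {ω | P (Z 0 ω)} := ENNReal.toReal_pos hpos (measure_ne_top _ _)
  refine tendsto_natCast_atTop_iff.1 ((tendsto_natCast_atTop_atTop.atTop_mul_pos hq hω).congr' ?_)
  filter_upwards [eventually_ne_atTop 0] with n hn
  field_simp

lemma ae_tendsto_filter_average_integral_cond (hZ : Measurable (Z 0)) (hindep : iIndepFun Z μ)
    (hident : ∀ i, IdentDistrib (Z i) (Z 0) μ μ) (hP : MeasurableSet {a | P a})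
    (hpos : μ {ω | P (Z 0 ω)} ≠ 0) {g : α → E} (hg : Measurable g)
    (hint : Integrable (g ∘ Z 0) μ) :
    ∀ᵐ ω ∂μ, Tendsto (fun n => (#{i ∈ range n | P (Z i ω)} : ℝ)⁻¹ •
      ∑ i ∈ range n with P (Z i ω), g (Z i ω)) atTop
      (𝓝 (∫ ω, g (Z 0 ω) ∂μ[|{ω | P (Z 0 ω)}])) := by
  have hq : μ.real {ω | P (Z 0 ω)} ≠ 0 := (ENNReal.toReal_pos hpos (measure_ne_top _ _)).ne'
  have hsum := ae_tendsto_average_comp hindep hident (hg.indicator hP)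
    (hint.indicator (hZ hP))
  filter_upwards [hsum, ae_tendsto_inv_mul_card_filter hZ hindep hident hP] with ω hω hcard
  have hlim : ∫ ω, g (Z 0 ω) ∂μ[|{ω | P (Z 0 ω)}] =
      (μ.real {ω | P (Z 0 ω)})⁻¹ • ∫ ω, {a | P a}.indicator g (Z 0 ω) ∂μ := by
    have hs : MeasurableSet {ω | P (Z 0 ω)} := hZ hP
    rw [ProbabilityTheory.cond, integral_smul_measure, ENNReal.toReal_inv,
      ← integral_indicator hs]
    rfl
  rw [hlim]
  refine ((hcard.inv₀ hq).smul hω).congr' ?_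
  filter_upwards [eventually_ne_atTop 0] with n hn
  have hn' : (n : ℝ) ≠ 0 := Nat.cast_ne_zero.2 hn
  rw [smul_smul, mul_inv, inv_inv, mul_right_comm, mul_inv_cancel₀ hn', one_mul, sum_filter]
  simp [Set.indicator_apply]

end StrongLaw

theorem stmt_16_general {Ω 𝓧 : Type*} [m0 : MeasurableSpace Ω] [MeasurableSpace 𝓧]
    (μ : Measure Ω) [IsProbabilityMeasure μ]
    (X : ℕ → Ω → 𝓧) (T : ℕ → Ω → Bool)
    (hXm : ∀ i, Measurable (X i)) (hTm : ∀ i, Measurable (T i))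
    (hindep : iIndepFun (fun i ω => (X i ω, T i ω)) μ)
    (hident : ∀ i, μ.map (fun ω => (X i ω, T i ω)) = μ.map (fun ω => (X 0 ω, T 0 ω)))
    {p : ℕ} (c : 𝓧 → Fin p → ℝ) (hc : Measurable c)
    (hcint : Integrable (fun ω => c (X 0 ω)) μ)
    (hT1 : μ {ω | T 0 ω = true} ≠ 0)
    (cstar : Fin p → ℝ)
    (hcstar : ∀ j, cstar j = ∫ ω, c (X 0 ω) j ∂(μ[|{ω | T 0 ω = true}]))
    (ε : ℝ) (hε : 0 < ε)
    (hbox : ∀ b : Fin p → ℝ, (∀ j, b j = -1 ∨ b j = 0 ∨ b j = 1) →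
      0 < μ[|{ω | T 0 ω = false}]
        {ω | ∀ j, |c (X 0 ω) j - (cstar j + 3 / 2 * ε * b j)| ≤ ε / 2}) :
    ∀ δ : ℝ, 0 < δ →
    Tendsto (fun n => μ {ω | ∃ w : ℕ → ℝ,
        (∀ i ∈ (Finset.range n).filter (fun i => T i ω = false), 0 < w i) ∧
        (∑ i ∈ (Finset.range n).filter (fun i => T i ω = false), w i = 1) ∧
        (∀ j, ∑ i ∈ (Finset.range n).filter (fun i => T i ω = false), w i * c (X i ω) j
          = ((((Finset.range n).filter (fun i => T i ω = true)).card : ℝ))⁻¹ *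
            ∑ i ∈ (Finset.range n).filter (fun i => T i ω = true), c (X i ω) j) ∧
        (∀ i ∈ (Finset.range n).filter (fun i => T i ω = false), w i < δ) ∧
        (∑ i ∈ (Finset.range n).filter (fun i => T i ω = false), (w i) ^ 2 < δ)})
      atTop (nhds 1) := by
  classical
  intro δ hδ
  obtain ⟨k, hk⟩ := exists_nat_one_div_lt hδ
  have hZ : ∀ i, Measurable fun ω => (X i ω, T i ω) := fun i => (hXm i).prodMk (hTm i)
  have hZident : ∀ i, IdentDistrib (fun ω => (X i ω, T i ω)) (fun ω => (X 0 ω, T 0 ω)) μ μ :=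
    fun i => ⟨(hZ i).aemeasurable, (hZ 0).aemeasurable, hident i⟩
  have hcX : Measurable fun q : 𝓧 × Bool => c q.1 := hc.comp measurable_fst
  have hT : ∀ t, MeasurableSet {q : 𝓧 × Bool | q.2 = t} := fun t =>
    measurable_snd (measurableSet_singleton t)
  have hcond : Integrable (fun ω => c (X 0 ω)) μ[|{ω | T 0 ω = true}] :=
    hcint.restrict.smul_measure (ENNReal.inv_ne_top.2 hT1)
  have hcstar' : ∫ ω, c (X 0 ω) ∂μ[|{ω | T 0 ω = true}] = cstar :=
    funext fun j => by rw [eval_integral hcond.eval, hcstar j]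
  have htreated := ae_tendsto_filter_average_integral_cond (hZ 0) hindep hZident (hT true) hT1
    hcX hcint
  rw [hcstar'] at htreated
  set corner : (Fin p → Bool) → 𝓧 × Bool → Prop := fun b q =>
    q.2 = false ∧ ‖c q.1 - (cstar + (3 / 2 * ε) • cubeVertex b)‖ ≤ ε / 2
  have hcorner : ∀ᵐ ω ∂μ, ∀ b,
      Tendsto (fun n => #{i ∈ range n | corner b (X i ω, T i ω)}) atTop atTop :=
    ae_all_iff.2 fun b => ae_tendsto_card_filter_atTop (P := corner b) (hZ 0) hindep hZident
      ((hT false).inter (measurableSet_le (hcX.sub_const _).norm measurable_const))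
      (measure_inter_ne_zero_of_cond_pos (hTm 0 (measurableSet_singleton false)) (half_pos hε).le
        (hbox _ fun j => by unfold cubeVertex; split <;> simp))
  apply tendsto_measure_of_ae_eventually_mem
  filter_upwards [htreated, hcorner] with ω htreated hcorner
  filter_upwards [htreated.eventually (Metric.closedBall_mem_nhds _ (half_pos hε)),
    eventually_all.2 fun b => (hcorner b).eventually_ge_atTop (k + 1)] with n hy hK
  exact exists_feasible_weights hε k.succ_pos (by simpa using hk)
    (fun b => ⟨_, monotone_filter_right _ fun _ _ => And.left, hK b,
      fun i hi => (mem_filter.1 hi).2.2⟩)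
    (mem_closedBall_iff_norm.1 hy)

/-- Proposition 1, second part: under the same assumptions as the
existence result, for every `δ > 0` the probability that there exist feasible Entropy
Balancing weights (strictly positive, summing to one, exactly balancing the treated
moment average) with `max_i w i < δ` — and hence `∑ i (w i)^2 < δ` — tends to `1`
as `n → ∞`. -/
theorem stmt_16 {Ω 𝓧 : Type*} [m0 : MeasurableSpace Ω] [MeasurableSpace 𝓧]
    (μ : Measure Ω) [IsProbabilityMeasure μ]
    (X : ℕ → Ω → 𝓧) (T : ℕ → Ω → Bool)
    (hXm : ∀ i, Measurable (X i)) (hTm : ∀ i, Measurable (T i))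
    (hindep : iIndepFun (fun i ω => (X i ω, T i ω)) μ)
    (hident : ∀ i, μ.map (fun ω => (X i ω, T i ω)) = μ.map (fun ω => (X 0 ω, T 0 ω)))
    {p : ℕ} (c : 𝓧 → Fin p → ℝ) (hc : Measurable c)
    (hcint : Integrable (fun ω => c (X 0 ω)) μ)
    (hT1 : μ {ω | T 0 ω = true} ≠ 0) (hT0 : μ {ω | T 0 ω = false} ≠ 0)
    (cstar : Fin p → ℝ)
    (hcstar : ∀ j, cstar j = ∫ ω, c (X 0 ω) j ∂(μ[|{ω | T 0 ω = true}]))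
    (ε : ℝ) (hε : 0 < ε)
    (hbox : ∀ b : Fin p → ℝ, (∀ j, b j = -1 ∨ b j = 0 ∨ b j = 1) →
      0 < μ[|{ω | T 0 ω = false}]
        {ω | ∀ j, |c (X 0 ω) j - (cstar j + 3 / 2 * ε * b j)| ≤ ε / 2}) :
    ∀ δ : ℝ, 0 < δ →
    Tendsto (fun n => μ {ω | ∃ w : ℕ → ℝ,
        (∀ i ∈ (Finset.range n).filter (fun i => T i ω = false), 0 < w i) ∧
        (∑ i ∈ (Finset.range n).filter (fun i => T i ω = false), w i = 1) ∧
        (∀ j, ∑ i ∈ (Finset.range n).filter (fun i => T i ω = false), w i * c (X i ω) j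
          = ((((Finset.range n).filter (fun i => T i ω = true)).card : ℝ))⁻¹ *
            ∑ i ∈ (Finset.range n).filter (fun i => T i ω = true), c (X i ω) j) ∧
        (∀ i ∈ (Finset.range n).filter (fun i => T i ω = false), w i < δ) ∧
        (∑ i ∈ (Finset.range n).filter (fun i => T i ω = false), (w i) ^ 2 < δ)})
      atTop (nhds 1) :=
  stmt_16_general (m0 := m0) μ X T hXm hTm hindep hident c hc hcint hT1 cstar hcstar ε hε hbox
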